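/- The map d_IQ is a metric on the space of univariate probability distributions on ℝ with continuous CDF and finite first moment: d_IQ(F,G) ≥ 0, d_IQ(F,G) = d_IQ(G,F), d_IQ satisfies the triangle inequality d_IQ(F,H) ≤ d_IQ(F,G) + d_IQ(G,H), and d_IQ(F,G) = 0 if and only if F = G. -/

import Mathlib

open MeasureTheory Filter Set ProbabilityTheory

noncomputable def quantileFn (μ : Measure ℝ) (p : ℝ) : ℝ :=
  sInf {η : ℝ | p ≤ (μ (Set.Iic η)).toReal}

noncomputable def intQuantile (μ : Measure ℝ) (p : ℝ) : ℝ :=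
  ∫ t in (0:ℝ)..p, quantileFn μ t

noncomputable def dIQ (μ ν : Measure ℝ) : ℝ :=
  Real.sqrt (∫ t in (0:ℝ)..1, (intQuantile μ t - intQuantile ν t) ^ 2)

/-! The quantile function `Q` of a probability measure is the lower Galois adjoint of its CDF on
`(0, 1)`, so pushing Lebesgue measure on `(0, 1)` forward along `Q` recovers the measure. A finite
first moment makes `Q` integrable, so the integrated quantile function is continuous on `[0, 1]`
and lies in `L²(0, 1)`; `d_IQ` is then the `L²` distance between integrated quantile functions,
which gives everything but definiteness. If the distance vanishes, continuity turns a.e. equality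
into equality on `(0, 1)`. Bounding difference quotients of the integrated quantile functions by
the monotone `Q` gives `Q_F(a) ≤ Q_G(t)` for all `a < t`, and left continuity of `Q_F` (again the
Galois connection) yields `Q_F ≤ Q_G`; by symmetry the quantile functions, hence the measures,
agree. -/

section Lp

variable {α : Type*} [MeasurableSpace α] {μ : Measure α}

lemma MeasureTheory.MemLp.dist_toLp_eq_sqrt_integral_sq {f g : α → ℝ} (hf : MemLp f 2 μ)
    (hg : MemLp g 2 μ) : dist (hf.toLp f) (hg.toLp g) = √(∫ x, (f x - g x) ^ 2 ∂μ) := by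
  rw [Lp.dist_edist, Lp.edist_toLp_toLp,
    (hf.sub hg).eLpNorm_eq_integral_rpow_norm two_ne_zero ENNReal.ofNat_ne_top,
    ENNReal.toReal_ofReal (by positivity), Real.sqrt_eq_rpow]
  simp [Real.norm_eq_abs]

lemma ContinuousOn.memLp_restrict_of_isCompact [TopologicalSpace α] [T2Space α]
    [OpensMeasurableSpace α] [IsFiniteMeasureOnCompacts μ] {E : Type*} [NormedAddCommGroup E]
    {f : α → E} {K : Set α} (hK : IsCompact K) (hf : ContinuousOn f K) (p : ENNReal) :
    MemLp f p (μ.restrict K) := by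
  have : IsFiniteMeasure (μ.restrict K) := isFiniteMeasure_restrict.2 hK.measure_lt_top.ne
  have hKm : MeasurableSet K := hK.isClosed.measurableSet
  obtain ⟨C, hC⟩ := hK.exists_bound_of_continuousOn hf
  exact (memLp_top_of_bound (hf.aestronglyMeasurable_of_isCompact hK hKm) C
    ((ae_restrict_iff' hKm).2 (ae_of_all _ hC))).mono_exponent le_top

end Lp

lemma MonotoneOn.mul_sub_le_intervalIntegral {f : ℝ → ℝ} {a b : ℝ} (hf : MonotoneOn f (Icc a b))
    (hab : a ≤ b) : f a * (b - a) ≤ ∫ x in a..b, f x := by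
  have hint : IntervalIntegrable f volume a b :=
    (hf.mono (uIcc_of_le hab).subset).intervalIntegrable
  simpa [mul_comm] using intervalIntegral.integral_mono_on hab intervalIntegrable_const hint
    fun x hx => hf (left_mem_Icc.2 hab) hx hx.1

lemma MonotoneOn.intervalIntegral_le_mul_sub {f : ℝ → ℝ} {a b : ℝ} (hf : MonotoneOn f (Icc a b))
    (hab : a ≤ b) : ∫ x in a..b, f x ≤ f b * (b - a) := by
  have hint : IntervalIntegrable f volume a b :=
    (hf.mono (uIcc_of_le hab).subset).intervalIntegrable
  simpa [mul_comm] using intervalIntegral.integral_mono_on hab hint intervalIntegrable_const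
    fun x hx => hf hx (right_mem_Icc.2 hab) hx.2

section Quantile

variable (μ : Measure ℝ)

lemma nonempty_setOf_le_cdf {p : ℝ} (hp : p < 1) : {η | p ≤ cdf μ η}.Nonempty :=
  (((tendsto_cdf_atTop μ).eventually (lt_mem_nhds hp)).exists).imp fun _ => le_of_lt

lemma bddBelow_setOf_le_cdf {p : ℝ} (hp : 0 < p) : BddBelow {η | p ≤ cdf μ η} := by
  obtain ⟨x, hx⟩ := ((tendsto_cdf_atBot μ).eventually (gt_mem_nhds hp)).exists
  exact ⟨x, fun η hη => le_of_not_gt fun hηx => (hη.trans (monotone_cdf μ hηx.le)).not_gt hx⟩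

variable [IsProbabilityMeasure μ]

lemma quantileFn_eq_sInf_cdf (p : ℝ) : quantileFn μ p = sInf {η | p ≤ cdf μ η} := by
  simp only [quantileFn, cdf_eq_real, measureReal_def]

lemma le_cdf_quantileFn {p : ℝ} (hp : p ∈ Ioo 0 1) : p ≤ cdf μ (quantileFn μ p) := by
  rw [quantileFn_eq_sInf_cdf]
  have hright : ∀ x > sInf {η | p ≤ cdf μ η}, p ≤ cdf μ x := fun x hx => by
    obtain ⟨η, hη, hηx⟩ := exists_lt_of_csInf_lt (nonempty_setOf_le_cdf μ hp.2) hx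
    exact hη.trans (monotone_cdf μ hηx.le)
  exact ge_of_tendsto ((cdf μ).right_continuous _ |>.mono Ioi_subset_Ici_self)
    (eventually_nhdsWithin_of_forall hright)

lemma quantileFn_le_iff {p x : ℝ} (hp : p ∈ Ioo 0 1) : quantileFn μ p ≤ x ↔ p ≤ cdf μ x := by
  refine ⟨fun h => (le_cdf_quantileFn μ hp).trans (monotone_cdf μ h), fun h => ?_⟩
  rw [quantileFn_eq_sInf_cdf]
  exact csInf_le (bddBelow_setOf_le_cdf μ hp.1) h

lemma monotoneOn_quantileFn : MonotoneOn (quantileFn μ) (Ioo 0 1) := fun _ hp _ hq hpq =>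
  (quantileFn_le_iff μ hp).2 (hpq.trans (le_cdf_quantileFn μ hq))

lemma quantileFn_le_of_forall_lt {t x : ℝ} (ht : t ∈ Ioo 0 1)
    (h : ∀ a ∈ Ioo 0 t, quantileFn μ a ≤ x) : quantileFn μ t ≤ x := by
  rw [quantileFn_le_iff μ ht]
  refine le_of_forall_lt_imp_le_of_dense fun a hat => ?_
  rcases le_or_gt a 0 with ha | ha
  · exact ha.trans (cdf_nonneg μ x)
  · exact (quantileFn_le_iff μ ⟨ha, hat.trans ht.2⟩).1 (h a ⟨ha, hat⟩)

lemma aemeasurable_quantileFn : AEMeasurable (quantileFn μ) (volume.restrict (Ioo 0 1)) :=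
  aemeasurable_restrict_of_monotoneOn measurableSet_Ioo (monotoneOn_quantileFn μ)

lemma map_quantileFn : (volume.restrict (Ioo 0 1)).map (quantileFn μ) = μ := by
  refine (Measure.ext_of_Iic μ _ fun x => ?_).symm
  have hpreimage : quantileFn μ ⁻¹' Iic x ∩ Ioo 0 1 = Iic (cdf μ x) ∩ Ioo 0 1 := by
    ext t
    simp only [mem_inter_iff, mem_preimage, mem_Iic, and_congr_left_iff]
    exact quantileFn_le_iff μ
  rw [Measure.map_apply_of_aemeasurable (aemeasurable_quantileFn μ) measurableSet_Iic,
    Measure.restrict_apply' measurableSet_Ioo, hpreimage,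
    measure_congr ((ae_eq_refl _).inter Ioo_ae_eq_Ioc), Iic_inter_Ioc_of_le (cdf_le_one μ x),
    Real.volume_Ioc, sub_zero, cdf_eq_real, ofReal_measureReal]

lemma integrableOn_quantileFn (hμ : Integrable id μ) : IntegrableOn (quantileFn μ) (Ioo 0 1) := by
  rw [← map_quantileFn μ,
    integrable_map_measure aestronglyMeasurable_id (aemeasurable_quantileFn μ)] at hμ
  exact hμ

end Quantile

section IntQuantile

variable {μ : Measure ℝ}

lemma intervalIntegrable_quantileFn (hμ : IntegrableOn (quantileFn μ) (Ioo 0 1)) {b : ℝ}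
    (hb : b ∈ Icc 0 1) : IntervalIntegrable (quantileFn μ) volume 0 b :=
  (intervalIntegrable_iff_integrableOn_Ioo_of_le hb.1).2 (hμ.mono_set (Ioo_subset_Ioo_right hb.2))

lemma continuousOn_intQuantile (hμ : IntegrableOn (quantileFn μ) (Ioo 0 1)) :
    ContinuousOn (intQuantile μ) (Icc 0 1) := by
  have h := intervalIntegral.continuousOn_primitive_interval'
    (intervalIntegrable_quantileFn hμ (right_mem_Icc.2 zero_le_one)) left_mem_uIcc
  rw [uIcc_of_le zero_le_one] at h
  exact h

lemma intQuantile_sub_intQuantile (hμ : IntegrableOn (quantileFn μ) (Ioo 0 1)) {a b : ℝ}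
    (ha : a ∈ Icc 0 1) (hb : b ∈ Icc 0 1) :
    intQuantile μ b - intQuantile μ a = ∫ t in a..b, quantileFn μ t :=
  intervalIntegral.integral_interval_sub_left (intervalIntegrable_quantileFn hμ hb)
    (intervalIntegrable_quantileFn hμ ha)

lemma memLp_intQuantile (hμ : IntegrableOn (quantileFn μ) (Ioo 0 1)) :
    MemLp (intQuantile μ) 2 (volume.restrict (Ioo 0 1)) :=
  ((continuousOn_intQuantile hμ).memLp_restrict_of_isCompact isCompact_Icc 2).mono_measure
    (Measure.restrict_mono Ioo_subset_Icc_self le_rfl)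

end IntQuantile

section Identifiability

variable {μ ν : Measure ℝ} [IsProbabilityMeasure μ] [IsProbabilityMeasure ν]

lemma quantileFn_le_of_eqOn_intQuantile (hμ : IntegrableOn (quantileFn μ) (Ioo 0 1))
    (hν : IntegrableOn (quantileFn ν) (Ioo 0 1))
    (h : EqOn (intQuantile μ) (intQuantile ν) (Ioo 0 1)) {t : ℝ} (ht : t ∈ Ioo 0 1) :
    quantileFn μ t ≤ quantileFn ν t := by
  refine quantileFn_le_of_forall_lt μ ht fun a ha => ?_
  have ha' : a ∈ Ioo 0 1 := ⟨ha.1, ha.2.trans ht.2⟩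
  have hsub : Icc a t ⊆ Ioo 0 1 := Icc_subset_Ioo ha.1 ht.2
  refine le_of_mul_le_mul_right ?_ (sub_pos.2 ha.2)
  calc quantileFn μ a * (t - a)
      ≤ ∫ s in a..t, quantileFn μ s :=
        ((monotoneOn_quantileFn μ).mono hsub).mul_sub_le_intervalIntegral ha.2.le
    _ = intQuantile μ t - intQuantile μ a :=
        (intQuantile_sub_intQuantile hμ (Ioo_subset_Icc_self ha') (Ioo_subset_Icc_self ht)).symm
    _ = intQuantile ν t - intQuantile ν a := by rw [h ht, h ha']
    _ = ∫ s in a..t, quantileFn ν s :=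
        intQuantile_sub_intQuantile hν (Ioo_subset_Icc_self ha') (Ioo_subset_Icc_self ht)
    _ ≤ quantileFn ν t * (t - a) :=
        ((monotoneOn_quantileFn ν).mono hsub).intervalIntegral_le_mul_sub ha.2.le

lemma eq_of_eqOn_quantileFn (h : EqOn (quantileFn μ) (quantileFn ν) (Ioo 0 1)) : μ = ν := by
  rw [← map_quantileFn μ, ← map_quantileFn ν]
  exact Measure.map_congr (ae_restrict_of_forall_mem measurableSet_Ioo h)

lemma eq_of_intQuantile_ae_eq (hμ : IntegrableOn (quantileFn μ) (Ioo 0 1))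
    (hν : IntegrableOn (quantileFn ν) (Ioo 0 1))
    (h : intQuantile μ =ᵐ[volume.restrict (Ioo 0 1)] intQuantile ν) : μ = ν := by
  have hIQ : EqOn (intQuantile μ) (intQuantile ν) (Ioo 0 1) :=
    Measure.eqOn_open_of_ae_eq h isOpen_Ioo ((continuousOn_intQuantile hμ).mono Ioo_subset_Icc_self)
      ((continuousOn_intQuantile hν).mono Ioo_subset_Icc_self)
  exact eq_of_eqOn_quantileFn fun t ht => le_antisymm
    (quantileFn_le_of_eqOn_intQuantile hμ hν hIQ ht)
    (quantileFn_le_of_eqOn_intQuantile hν hμ hIQ.symm ht)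

end Identifiability

lemma dIQ_eq_dist {μ ν : Measure ℝ} (hμ : MemLp (intQuantile μ) 2 (volume.restrict (Ioo 0 1)))
    (hν : MemLp (intQuantile ν) 2 (volume.restrict (Ioo 0 1))) :
    dIQ μ ν = dist (hμ.toLp (intQuantile μ)) (hν.toLp (intQuantile ν)) := by
  rw [hμ.dist_toLp_eq_sqrt_integral_sq, dIQ, intervalIntegral.integral_of_le zero_le_one,
    integral_Ioc_eq_integral_Ioo]

theorem dIQ_is_metric_general
    (F G H : Measure ℝ) [IsProbabilityMeasure F] [IsProbabilityMeasure G]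
    [IsProbabilityMeasure H]
    (hFmom : Integrable id F) (hGmom : Integrable id G) (hHmom : Integrable id H) :
    0 ≤ dIQ F G ∧ dIQ F G = dIQ G F ∧ dIQ F H ≤ dIQ F G + dIQ G H ∧
      (dIQ F G = 0 ↔ F = G) := by
  have hF := integrableOn_quantileFn F hFmom
  have hG := integrableOn_quantileFn G hGmom
  have hH := integrableOn_quantileFn H hHmom
  rw [dIQ_eq_dist (memLp_intQuantile hF) (memLp_intQuantile hG),
    dIQ_eq_dist (memLp_intQuantile hG) (memLp_intQuantile hF),
    dIQ_eq_dist (memLp_intQuantile hF) (memLp_intQuantile hH),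
    dIQ_eq_dist (memLp_intQuantile hG) (memLp_intQuantile hH), dist_eq_zero,
    MemLp.toLp_eq_toLp_iff]
  refine ⟨dist_nonneg, dist_comm _ _, dist_triangle _ _ _, eq_of_intQuantile_ae_eq hF hG, ?_⟩
  rintro rfl
  rfl

/-- `d_IQ` is a metric on the space of univariate probability distributions
on `ℝ` with continuous CDF and finite first moment: nonnegativity, symmetry, triangle
inequality, and `d_IQ(F,G) = 0 ↔ F = G`. -/
theorem dIQ_is_metric
    (F G H : Measure ℝ) [IsProbabilityMeasure F] [IsProbabilityMeasure G]
    [IsProbabilityMeasure H]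
    (hFcdf : Continuous fun x => (F (Set.Iic x)).toReal)
    (hGcdf : Continuous fun x => (G (Set.Iic x)).toReal)
    (hHcdf : Continuous fun x => (H (Set.Iic x)).toReal)
    (hFmom : Integrable id F) (hGmom : Integrable id G) (hHmom : Integrable id H) :
    0 ≤ dIQ F G ∧ dIQ F G = dIQ G F ∧ dIQ F H ≤ dIQ F G + dIQ G H ∧
      (dIQ F G = 0 ↔ F = G) :=
  dIQ_is_metric_general F G H hFmom hGmom hHmom
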